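/- arXiv:2105.08832 — 2 statements merged into one kernel-verified Lean document; each statement's English description precedes it below -/
import Mathlib

section
/- Suppose g : E → ℝ → E satisfies the one-sided Lipschitz condition with rate γ̄ : ℝ → ℝ (with respect to ‖·‖_P) on [0, ∞), with γ̄(t) > 0 for all t ≥ 0. Let h > 0, let x* ∈ E satisfy g x* t = 0 for all t ≥ 0, and let y : ℕ → E satisfy the implicit Euler recursion y (k+1) = y k + h • g (y (k+1)) ((k+1)·h) for all k. Then for every k ≥ 1, ‖y k − x*‖_P ≤ (∏_{m=1}^{k} (1 + h·γ̄(m·h))⁻¹) · ‖y 0 − x*‖_P; in particular, if γ̄ is the constant function γ > 0, then ‖y k − x*‖_P ≤ (1 + h·γ)^(−k) · ‖y 0 − x*‖_P. -/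
/-!
Write `e_k = y_k - x*`. Since `g x* = 0`, the implicit Euler step reads
`e_{k+1} = e_k + h (g(y_{k+1}) - g(x*))`; pairing it with `e_{k+1}` in `⟪·,·⟫_P`, the one-sided
Lipschitz condition and Cauchy–Schwarz give `(1 + h γ̄) ‖e_{k+1}‖_P² ≤ ‖e_{k+1}‖_P ‖e_k‖_P`,
i.e. each step contracts by the factor `(1 + h γ̄((k+1)h))⁻¹`; iterating gives the product bound.
-/

open Finset

/-- Weighted inner product `⟪u, P.mulVec v⟫` on Euclidean space. -/
noncomputable def wip {n : ℕ} (P : Matrix (Fin n) (Fin n) ℝ)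
    (u v : EuclideanSpace ℝ (Fin n)) : ℝ :=
  ∑ i, u i * P.mulVec (fun j => v j) i

/-- Weighted norm `‖u‖_P = √⟪u, u⟫_P`. -/
noncomputable def wnorm {n : ℕ} (P : Matrix (Fin n) (Fin n) ℝ)
    (u : EuclideanSpace ℝ (Fin n)) : ℝ :=
  Real.sqrt (wip P u u)

open Matrix

section WeightedInner

variable {n : ℕ} (P : Matrix (Fin n) (Fin n) ℝ)

lemma wip_eq_dotProduct (u v : EuclideanSpace ℝ (Fin n)) :
    wip P u v = WithLp.ofLp u ⬝ᵥ (P *ᵥ WithLp.ofLp v) := rfl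

lemma wip_add_right (u v w : EuclideanSpace ℝ (Fin n)) :
    wip P u (v + w) = wip P u v + wip P u w := by
  simp only [wip_eq_dotProduct, WithLp.ofLp_add, mulVec_add, dotProduct_add]

lemma wip_smul_right (c : ℝ) (u v : EuclideanSpace ℝ (Fin n)) :
    wip P u (c • v) = c * wip P u v := by
  simp only [wip_eq_dotProduct, WithLp.ofLp_smul, mulVec_smul, dotProduct_smul, smul_eq_mul]

lemma wnorm_nonneg (u : EuclideanSpace ℝ (Fin n)) : 0 ≤ wnorm P u := Real.sqrt_nonneg _

variable {P} (hP : P.PosSemidef)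
include hP

lemma wnorm_sq (u : EuclideanSpace ℝ (Fin n)) : wnorm P u ^ 2 = wip P u u :=
  Real.sq_sqrt (by simpa [wip_eq_dotProduct] using hP.dotProduct_mulVec_nonneg (WithLp.ofLp u))

lemma wip_le_wnorm_mul_wnorm (u v : EuclideanSpace ℝ (Fin n)) :
    wip P u v ≤ wnorm P u * wnorm P v := by
  -- Cauchy–Schwarz in the inner product space structure that `P` puts on `Fin n → ℝ`.
  let := P.toSeminormedAddCommGroup hP
  let := P.toInnerProductSpace hP
  simp only [wnorm, wip_eq_dotProduct, dotProduct_comm (WithLp.ofLp _)]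
  exact real_inner_le_norm (WithLp.ofLp u) (WithLp.ofLp v)

lemma wnorm_add_smul_le {u d : EuclideanSpace ℝ (Fin n)} {h c : ℝ} (hh : 0 ≤ h)
    (hc : 0 < 1 + h * c) (hd : wip P (u + h • d) d ≤ -c * wnorm P (u + h • d) ^ 2) :
    wnorm P (u + h • d) ≤ (1 + h * c)⁻¹ * wnorm P u := by
  set A := wnorm P (u + h • d)
  have hexpand : A ^ 2 = wip P (u + h • d) u + h * wip P (u + h • d) d := by
    rw [wnorm_sq hP, wip_add_right, wip_smul_right]
  have hsq : A * ((1 + h * c) * A) ≤ A * wnorm P u := by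
    linarith [wip_le_wnorm_mul_wnorm hP (u + h • d) u, mul_le_mul_of_nonneg_left hd hh]
  rw [inv_mul_eq_div, le_div_iff₀ hc, mul_comm]
  rcases (show 0 ≤ A from wnorm_nonneg P _).eq_or_lt with hA_zero | hA_pos
  · rw [← hA_zero, mul_zero]
    exact wnorm_nonneg P u
  · exact le_of_mul_le_mul_left hsq hA_pos

end WeightedInner

lemma le_prod_Icc_mul_of_le_mul {a r : ℕ → ℝ} (hr : ∀ k, 0 ≤ r (k + 1))
    (har : ∀ k, a (k + 1) ≤ r (k + 1) * a k) (k : ℕ) :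
    a k ≤ (∏ m ∈ Icc 1 k, r m) * a 0 := by
  induction k with
  | zero => simp
  | succ k ih =>
    calc a (k + 1) ≤ r (k + 1) * a k := har k
      _ ≤ r (k + 1) * ((∏ m ∈ Icc 1 k, r m) * a 0) := mul_le_mul_of_nonneg_left ih (hr k)
      _ = (∏ m ∈ Icc 1 (k + 1), r m) * a 0 := by
        rw [prod_Icc_succ_top (by omega)]; ring

theorem stmt_3_general {n : ℕ} (P : Matrix (Fin n) (Fin n) ℝ)
    (hPpos : P.PosDef)
    (g : EuclideanSpace ℝ (Fin n) → ℝ → EuclideanSpace ℝ (Fin n))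
    (gam : ℝ → ℝ)
    (hOSL : ∀ x y : EuclideanSpace ℝ (Fin n), ∀ t : ℝ, 0 ≤ t →
      wip P (x - y) (g x t - g y t) ≤ -gam t * (wnorm P (x - y)) ^ 2)
    (hgam : ∀ t : ℝ, 0 ≤ t → 0 < gam t)
    (h : ℝ) (hh : 0 < h)
    (xs : EuclideanSpace ℝ (Fin n)) (hxs : ∀ t : ℝ, 0 ≤ t → g xs t = 0)
    (y : ℕ → EuclideanSpace ℝ (Fin n))
    (hy : ∀ k : ℕ, y (k + 1) = y k + h • g (y (k + 1)) (((k : ℝ) + 1) * h)) :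
    (∀ k : ℕ, 1 ≤ k →
      wnorm P (y k - xs) ≤
        (∏ m ∈ Finset.Icc 1 k, (1 + h * gam ((m : ℝ) * h))⁻¹) * wnorm P (y 0 - xs)) ∧
    (∀ γ : ℝ, 0 < γ → (∀ t : ℝ, gam t = γ) → ∀ k : ℕ, 1 ≤ k →
      wnorm P (y k - xs) ≤ (1 + h * γ) ^ (-(k : ℤ)) * wnorm P (y 0 - xs)) := by
  have hfactor : ∀ t, 0 ≤ t → 0 < 1 + h * gam t := fun t ht =>
    add_pos one_pos (mul_pos hh (hgam t ht))
  have hstep : ∀ k : ℕ, wnorm P (y (k + 1) - xs) ≤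
      (1 + h * gam (((k : ℝ) + 1) * h))⁻¹ * wnorm P (y k - xs) := by
    intro k
    set t := ((k : ℝ) + 1) * h
    have ht : 0 ≤ t := by positivity
    have hsplit : y (k + 1) - xs = (y k - xs) + h • (g (y (k + 1)) t - g xs t) := by
      rw [hxs t ht, sub_zero, sub_add_eq_add_sub, ← hy k]
    rw [hsplit]
    refine wnorm_add_smul_le hPpos.posSemidef hh.le (hfactor t ht) ?_
    rw [← hsplit]
    exact hOSL _ _ t ht
  have hprod : ∀ k, wnorm P (y k - xs) ≤
      (∏ m ∈ Icc 1 k, (1 + h * gam ((m : ℝ) * h))⁻¹) * wnorm P (y 0 - xs) :=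
    le_prod_Icc_mul_of_le_mul (fun k => (inv_pos.2 (hfactor _ (by positivity))).le)
      (fun k => by exact_mod_cast hstep k)
  refine ⟨fun k _ => hprod k, fun γ _ hγ k _ => ?_⟩
  simpa [hγ, _root_.zpow_neg, inv_pow] using hprod k

theorem stmt_3 {n : ℕ} (P : Matrix (Fin n) (Fin n) ℝ)
    (hPsymm : P.IsSymm) (hPpos : P.PosDef)
    (g : EuclideanSpace ℝ (Fin n) → ℝ → EuclideanSpace ℝ (Fin n))
    (gam : ℝ → ℝ)
    (hOSL : ∀ x y : EuclideanSpace ℝ (Fin n), ∀ t : ℝ, 0 ≤ t →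
      wip P (x - y) (g x t - g y t) ≤ -gam t * (wnorm P (x - y)) ^ 2)
    (hgam : ∀ t : ℝ, 0 ≤ t → 0 < gam t)
    (h : ℝ) (hh : 0 < h)
    (xs : EuclideanSpace ℝ (Fin n)) (hxs : ∀ t : ℝ, 0 ≤ t → g xs t = 0)
    (y : ℕ → EuclideanSpace ℝ (Fin n))
    (hy : ∀ k : ℕ, y (k + 1) = y k + h • g (y (k + 1)) (((k : ℝ) + 1) * h)) :
    (∀ k : ℕ, 1 ≤ k →
      wnorm P (y k - xs) ≤
        (∏ m ∈ Finset.Icc 1 k, (1 + h * gam ((m : ℝ) * h))⁻¹) * wnorm P (y 0 - xs)) ∧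
    (∀ γ : ℝ, 0 < γ → (∀ t : ℝ, gam t = γ) → ∀ k : ℕ, 1 ≤ k →
      wnorm P (y k - xs) ≤ (1 + h * γ) ^ (-(k : ℤ)) * wnorm P (y 0 - xs)) :=
  stmt_3_general P hPpos g gam hOSL hgam h hh xs hxs y hy
end

section
/- Suppose g : E → ℝ → E is uniformly ℓ-Lipschitz with respect to ‖·‖_P (i.e. ‖g x t − g y t‖_P ≤ ℓ·‖x − y‖_P for all x, y ∈ E, t ≥ 0), satisfies the one-sided Lipschitz condition with rate γ̄ (with respect to ‖·‖_P) on [0, ∞), and there exists c > 0 with c ≤ γ̄(t) < ℓ for all t ≥ 0. Let 0 < h < 2·c/ℓ², let x* : ℝ → E satisfy g (x* t) t = 0 for all t ≥ 0, and let y : ℕ → E satisfy the explicit Euler recursion y (k+1) = y k + h • g (y k) (k·h) for all k. Then for every k ≥ 1, ‖y k − x* (k·h)‖_P ≤ (∏_{m=0}^{k−1} (1 − 2·h·γ̄(m·h) + h²·ℓ²)^(1/2)) · ‖y 0 − x* 0‖_P + (if k > 1 then ∑_{m=1}^{k−1} (∏_{r=m}^{k−1} (1 − 2·h·γ̄(r·h)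 + h²·ℓ²)^(1/2)) · ‖x* (m·h) − x* ((m−1)·h)‖_P else 0) + ‖x* (k·h) − x* ((k−1)·h)‖_P. -/
open Finset

/-!
Factor `P = BᵀB`, so that the weighted norm is the Euclidean norm after the change of variables
`B`. For the error `e = y k - x* (k h)` one has `g (y k) = g (y k) - g (x* (k h))`, so the
one-sided Lipschitz and Lipschitz bounds give
`‖e + h g (y k)‖² = ‖e‖² + 2h⟪e, g (y k)⟫ + h²‖g (y k)‖² ≤ (1 - 2hγ̄ + h²ℓ²)‖e‖²`.
Moving the reference point from `x* (k h)` to `x* ((k+1) h)` costs the drift of `x*` by the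
triangle inequality, and unrolling the resulting linear recursion gives the bound.
-/

theorem norm_add_smul_le_sqrt_mul_norm {F : Type*} [NormedAddCommGroup F] [InnerProductSpace ℝ F]
    {e v : F} {γ ℓ h : ℝ} (hh : 0 ≤ h) (hosl : inner ℝ e v ≤ -γ * ‖e‖ ^ 2)
    (hlip : ‖v‖ ≤ ℓ * ‖e‖) :
    ‖e + h • v‖ ≤ Real.sqrt (1 - 2 * h * γ + h ^ 2 * ℓ ^ 2) * ‖e‖ := by
  have hsq : ‖e + h • v‖ ^ 2 ≤ (1 - 2 * h * γ + h ^ 2 * ℓ ^ 2) * ‖e‖ ^ 2 :=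
    calc ‖e + h • v‖ ^ 2 = ‖e‖ ^ 2 + 2 * h * inner ℝ e v + h ^ 2 * ‖v‖ ^ 2 := by
          rw [norm_add_sq_real, inner_smul_right, norm_smul, mul_pow, Real.norm_eq_abs, sq_abs]
          ring
      _ ≤ ‖e‖ ^ 2 + 2 * h * (-γ * ‖e‖ ^ 2) + h ^ 2 * (ℓ * ‖e‖) ^ 2 := by gcongr
      _ = (1 - 2 * h * γ + h ^ 2 * ℓ ^ 2) * ‖e‖ ^ 2 := by ring
  calc ‖e + h • v‖ = Real.sqrt (‖e + h • v‖ ^ 2) := (Real.sqrt_sq (norm_nonneg _)).symm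
    _ ≤ Real.sqrt ((1 - 2 * h * γ + h ^ 2 * ℓ ^ 2) * ‖e‖ ^ 2) := Real.sqrt_le_sqrt hsq
    _ = Real.sqrt (1 - 2 * h * γ + h ^ 2 * ℓ ^ 2) * ‖e‖ := by
      rw [Real.sqrt_mul' _ (sq_nonneg _), Real.sqrt_sq (norm_nonneg _)]

theorem le_prod_mul_add_sum_of_le_mul_add {a b q : ℕ → ℝ} (hq : ∀ k, 0 ≤ q k)
    (hrec : ∀ k, a (k + 1) ≤ q k * a k + b (k + 1)) (k : ℕ) :
    a (k + 1) ≤ (∏ m ∈ range (k + 1), q m) * a 0 +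
      ∑ m ∈ Icc 1 k, (∏ r ∈ Icc m k, q r) * b m + b (k + 1) := by
  induction k with
  | zero => simpa using hrec 0
  | succ k ih =>
    have hsum : ∑ m ∈ Icc 1 (k + 1), (∏ r ∈ Icc m (k + 1), q r) * b m =
        q (k + 1) * (∑ m ∈ Icc 1 k, (∏ r ∈ Icc m k, q r) * b m + b (k + 1)) := by
      rw [sum_Icc_succ_top (by omega), Icc_self, prod_singleton, mul_add, mul_sum]
      congr 1
      refine sum_congr rfl fun m hm => ?_
      rw [prod_Icc_succ_top (by grind)]
      ring
    calc a (k + 1 + 1) ≤ q (k + 1) * a (k + 1) + b (k + 1 + 1) := hrec (k + 1)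
      _ ≤ q (k + 1) * ((∏ m ∈ range (k + 1), q m) * a 0 +
            ∑ m ∈ Icc 1 k, (∏ r ∈ Icc m k, q r) * b m + b (k + 1)) + b (k + 1 + 1) := by
          gcongr
          exact hq _
      _ = _ := by rw [hsum, prod_range_succ _ (k + 1)]; ring

section Weighted

variable {n : ℕ} {P : Matrix (Fin n) (Fin n) ℝ}

open scoped MatrixOrder in
theorem Matrix.PosSemidef.exists_wip_eq_inner (hP : P.PosSemidef) :
    ∃ L : EuclideanSpace ℝ (Fin n) →ₗ[ℝ] EuclideanSpace ℝ (Fin n),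
      ∀ u v, wip P u v = inner ℝ (L u) (L v) := by
  obtain ⟨B, rfl⟩ := CStarAlgebra.nonneg_iff_eq_star_mul_self.1 hP.nonneg
  refine ⟨Matrix.toEuclideanLin B, fun u v => ?_⟩
  rw [EuclideanSpace.inner_eq_star_dotProduct]
  simp only [wip, Matrix.ofLp_toLpLin, Matrix.toLin'_apply, star_trivial, ← Matrix.mulVec_mulVec]
  change u.ofLp ⬝ᵥ _ = _
  rw [Matrix.dotProduct_mulVec, Matrix.star_eq_conjTranspose, Matrix.vecMul_conjTranspose,
    star_trivial, star_trivial, dotProduct_comm]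

theorem wnorm_eq_norm_of_wip_eq_inner
    {L : EuclideanSpace ℝ (Fin n) →ₗ[ℝ] EuclideanSpace ℝ (Fin n)}
    (hL : ∀ u v, wip P u v = inner ℝ (L u) (L v)) (u : EuclideanSpace ℝ (Fin n)) :
    wnorm P u = ‖L u‖ := by
  rw [wnorm, hL, real_inner_self_eq_norm_sq, Real.sqrt_sq (norm_nonneg _)]

theorem wnorm_sub_le (hP : P.PosSemidef) (u v : EuclideanSpace ℝ (Fin n)) :
    wnorm P (u - v) ≤ wnorm P u + wnorm P v := by
  obtain ⟨L, hL⟩ := hP.exists_wip_eq_inner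
  simp only [wnorm_eq_norm_of_wip_eq_inner hL, map_sub]
  exact norm_sub_le _ _

theorem wnorm_add_smul_le_s7 (hP : P.PosSemidef) {e v : EuclideanSpace ℝ (Fin n)} {γ ℓ h : ℝ}
    (hh : 0 ≤ h) (hosl : wip P e v ≤ -γ * wnorm P e ^ 2) (hlip : wnorm P v ≤ ℓ * wnorm P e) :
    wnorm P (e + h • v) ≤ Real.sqrt (1 - 2 * h * γ + h ^ 2 * ℓ ^ 2) * wnorm P e := by
  obtain ⟨L, hL⟩ := hP.exists_wip_eq_inner
  simp only [wnorm_eq_norm_of_wip_eq_inner hL, hL, map_add, map_smul] at hosl hlip ⊢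
  exact norm_add_smul_le_sqrt_mul_norm hh hosl hlip

theorem wnorm_euler_error_succ_le (hP : P.PosSemidef)
    {g : EuclideanSpace ℝ (Fin n) → ℝ → EuclideanSpace ℝ (Fin n)} {ℓ h : ℝ} {gam : ℝ → ℝ}
    {xs : ℝ → EuclideanSpace ℝ (Fin n)} {y : ℕ → EuclideanSpace ℝ (Fin n)}
    (hLip : ∀ x y : EuclideanSpace ℝ (Fin n), ∀ t : ℝ, 0 ≤ t →
      wnorm P (g x t - g y t) ≤ ℓ * wnorm P (x - y))
    (hOSL : ∀ x y : EuclideanSpace ℝ (Fin n), ∀ t : ℝ, 0 ≤ t →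
      wip P (x - y) (g x t - g y t) ≤ -gam t * (wnorm P (x - y)) ^ 2)
    (hh : 0 ≤ h) (hxs : ∀ t : ℝ, 0 ≤ t → g (xs t) t = 0)
    (hy : ∀ k : ℕ, y (k + 1) = y k + h • g (y k) ((k : ℝ) * h)) (k : ℕ) :
    wnorm P (y (k + 1) - xs (((k + 1 : ℕ) : ℝ) * h)) ≤
      Real.sqrt (1 - 2 * h * gam ((k : ℝ) * h) + h ^ 2 * ℓ ^ 2) * wnorm P (y k - xs ((k : ℝ) * h)) +
        wnorm P (xs (((k + 1 : ℕ) : ℝ) * h) - xs ((((k + 1 : ℕ) : ℝ) - 1) * h)) := by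
  set t := (k : ℝ) * h
  have ht : 0 ≤ t := by positivity
  have hOSL' := hOSL (y k) (xs t) t ht
  have hLip' := hLip (y k) (xs t) t ht
  rw [hxs t ht, sub_zero] at hOSL' hLip'
  have hprev : (((k + 1 : ℕ) : ℝ) - 1) * h = t := by push_cast; ring
  calc wnorm P (y (k + 1) - xs (((k + 1 : ℕ) : ℝ) * h))
      = wnorm P ((y k - xs t + h • g (y k) t) - (xs (((k + 1 : ℕ) : ℝ) * h) - xs t)) := by
        rw [hy k]; congr 1; abel
    _ ≤ wnorm P (y k - xs t + h • g (y k) t) + wnorm P (xs (((k + 1 : ℕ) : ℝ) * h) - xs t) :=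
        wnorm_sub_le hP _ _
    _ ≤ _ := by
        rw [hprev]
        gcongr
        exact wnorm_add_smul_le_s7 hP hh hOSL' hLip'

end Weighted

theorem stmt_7_general {n : ℕ} (P : Matrix (Fin n) (Fin n) ℝ)
    (hPpos : P.PosDef)
    (g : EuclideanSpace ℝ (Fin n) → ℝ → EuclideanSpace ℝ (Fin n))
    (ℓ : ℝ)
    (hLip : ∀ x y : EuclideanSpace ℝ (Fin n), ∀ t : ℝ, 0 ≤ t →
      wnorm P (g x t - g y t) ≤ ℓ * wnorm P (x - y))
    (gam : ℝ → ℝ)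
    (hOSL : ∀ x y : EuclideanSpace ℝ (Fin n), ∀ t : ℝ, 0 ≤ t →
      wip P (x - y) (g x t - g y t) ≤ -gam t * (wnorm P (x - y)) ^ 2)
    (h : ℝ) (hh : 0 < h)
    (xs : ℝ → EuclideanSpace ℝ (Fin n)) (hxs : ∀ t : ℝ, 0 ≤ t → g (xs t) t = 0)
    (y : ℕ → EuclideanSpace ℝ (Fin n))
    (hy : ∀ k : ℕ, y (k + 1) = y k + h • g (y k) ((k : ℝ) * h)) :
    ∀ k : ℕ, 1 ≤ k →
      wnorm P (y k - xs ((k : ℝ) * h)) ≤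
        (∏ m ∈ Finset.range k,
            Real.sqrt (1 - 2 * h * gam ((m : ℝ) * h) + h ^ 2 * ℓ ^ 2)) *
          wnorm P (y 0 - xs 0) +
        (if 1 < k then
          ∑ m ∈ Finset.Icc 1 (k - 1),
            (∏ r ∈ Finset.Icc m (k - 1),
                Real.sqrt (1 - 2 * h * gam ((r : ℝ) * h) + h ^ 2 * ℓ ^ 2)) *
              wnorm P (xs ((m : ℝ) * h) - xs (((m : ℝ) - 1) * h))
         else 0) +
        wnorm P (xs ((k : ℝ) * h) - xs (((k : ℝ) - 1) * h)) := by
  intro k hk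
  obtain ⟨j, rfl⟩ : ∃ j, k = j + 1 := ⟨k - 1, by omega⟩
  have key := le_prod_mul_add_sum_of_le_mul_add
    (a := fun k => wnorm P (y k - xs ((k : ℝ) * h)))
    (b := fun m => wnorm P (xs ((m : ℝ) * h) - xs (((m : ℝ) - 1) * h)))
    (q := fun m => Real.sqrt (1 - 2 * h * gam ((m : ℝ) * h) + h ^ 2 * ℓ ^ 2))
    (fun _ => Real.sqrt_nonneg _)
    (wnorm_euler_error_succ_le hPpos.posSemidef hLip hOSL hh.le hxs hy) j
  rcases j with _ | j <;> simpa using key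

theorem stmt_7 {n : ℕ} (P : Matrix (Fin n) (Fin n) ℝ)
    (hPsymm : P.IsSymm) (hPpos : P.PosDef)
    (g : EuclideanSpace ℝ (Fin n) → ℝ → EuclideanSpace ℝ (Fin n))
    (ℓ : ℝ)
    (hLip : ∀ x y : EuclideanSpace ℝ (Fin n), ∀ t : ℝ, 0 ≤ t →
      wnorm P (g x t - g y t) ≤ ℓ * wnorm P (x - y))
    (gam : ℝ → ℝ)
    (hOSL : ∀ x y : EuclideanSpace ℝ (Fin n), ∀ t : ℝ, 0 ≤ t →
      wip P (x - y) (g x t - g y t) ≤ -gam t * (wnorm P (x - y)) ^ 2)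
    (c : ℝ) (hc : 0 < c) (hgam : ∀ t : ℝ, 0 ≤ t → c ≤ gam t ∧ gam t < ℓ)
    (h : ℝ) (hh : 0 < h) (hh2 : h < 2 * c / ℓ ^ 2)
    (xs : ℝ → EuclideanSpace ℝ (Fin n)) (hxs : ∀ t : ℝ, 0 ≤ t → g (xs t) t = 0)
    (y : ℕ → EuclideanSpace ℝ (Fin n))
    (hy : ∀ k : ℕ, y (k + 1) = y k + h • g (y k) ((k : ℝ) * h)) :
    ∀ k : ℕ, 1 ≤ k →
      wnorm P (y k - xs ((k : ℝ) * h)) ≤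
        (∏ m ∈ Finset.range k,
            Real.sqrt (1 - 2 * h * gam ((m : ℝ) * h) + h ^ 2 * ℓ ^ 2)) *
          wnorm P (y 0 - xs 0) +
        (if 1 < k then
          ∑ m ∈ Finset.Icc 1 (k - 1),
            (∏ r ∈ Finset.Icc m (k - 1),
                Real.sqrt (1 - 2 * h * gam ((r : ℝ) * h) + h ^ 2 * ℓ ^ 2)) *
              wnorm P (xs ((m : ℝ) * h) - xs (((m : ℝ) - 1) * h))
         else 0) +
        wnorm P (xs ((k : ℝ) * h) - xs (((k : ℝ) - 1) * h)) :=
  stmt_7_general P hPpos g ℓ hLip gam hOSL h hh xs hxs y hy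
end
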